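/- Let f : 𝕋^d → ℂ have absolutely summable Fourier coefficients, let δ > 0, set I_δ := {k ∈ ℤ^d : |f̂_k| ≥ δ} (finite, nonempty), fix 1 ≤ t ≤ d, let k ∈ P_{{1,…,t}}(I_δ), and let 0 < δ' ≤ δ/√2. Denote g_k(ξ) := f̂_{{1,…,t},k}(ξ) for ξ ∈ 𝕋^{d−t}. Then ‖g_k‖_{L2(𝕋^{d−t})}² − δ'² > 0 and ‖g_k‖_{L∞(𝕋^{d−t})}² / (‖g_k‖_{L2(𝕋^{d−t})}² − δ'²) ≤ 4|I_δ| + (4/δ²)(Σ_{l∉I_δ} |f̂_l|)². -/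

import Mathlib

open MeasureTheory Complex

noncomputable section

/-- The unit cube `[0,1)^d`, a fundamental domain of the torus `𝕋^d = (ℝ/ℤ)^d`.
Functions on the torus are modelled as (1-periodic) functions on `ℝ^d`. -/
def cube (d : ℕ) : Set (Fin d → ℝ) := Set.univ.pi fun _ => Set.Ico (0 : ℝ) 1

/-- The uniform probability measure on the torus `𝕋^d`. -/
def torusMeasure (d : ℕ) : Measure (Fin d → ℝ) := volume.restrict (cube d)

/-- The exponential `exp(2πi⟨k,x⟩)`. -/
def char {d : ℕ} (k : Fin d → ℤ) (x : Fin d → ℝ) : ℂ :=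
  Complex.exp (2 * Real.pi * Complex.I * ∑ t, (k t : ℂ) * (x t : ℂ))

/-- The Fourier coefficient `f̂_k = ∫_{𝕋^d} f(x) e^{-2πi⟨k,x⟩} dx`. -/
def fCoeff {d : ℕ} (f : (Fin d → ℝ) → ℂ) (k : Fin d → ℤ) : ℂ :=
  ∫ x, f x * (starRingEnd ℂ) (char k x) ∂(torusMeasure d)

/-- The projection `P_I f = ∑_{k ∈ I} f̂_k e^{2πi⟨k,·⟩}`. -/
def projF {d : ℕ} (I : Finset (Fin d → ℤ)) (f : (Fin d → ℝ) → ℂ) : (Fin d → ℝ) → ℂ :=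
  fun x => ∑ k ∈ I, fCoeff f k * char k x

/-- Squared `L_2` norm on the torus. -/
def L2sq {d : ℕ} (g : (Fin d → ℝ) → ℂ) : ℝ := ∫ x, ‖g x‖ ^ 2 ∂(torusMeasure d)

/-- Supremum norm on the torus. -/
def supNorm {d : ℕ} (g : (Fin d → ℝ) → ℂ) : ℝ := ⨆ x ∈ cube d, ‖g x‖

/-- `f` has an absolutely convergent Fourier series. -/
def HasAbsFourierSeries {d : ℕ} (f : (Fin d → ℝ) → ℂ) : Prop :=
  Summable (fun k : Fin d → ℤ => ‖fCoeff f k‖) ∧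
    ∀ x, HasSum (fun k : Fin d → ℤ => fCoeff f k * char k x) (f x)

/-- The nodes of the rank-1 lattice with generating vector `z` and size `M`:
`xⁱ = (i z mod M 𝟙)/M`. -/
def lattice {d : ℕ} (z : Fin d → ℝ) (M : ℕ) : Fin M → (Fin d → ℝ) :=
  fun i t => Int.fract ((i : ℝ) * z t / M)

/-- A node set `x¹,…,x^M` is reconstructing for `I` if
`(1/M) ∑_i exp(2πi⟨k,xⁱ⟩) = δ_{0,k}` for all `k ∈ D(I) = {k - l : k, l ∈ I}`. -/
def IsReconstructing {d M : ℕ} (x : Fin M → (Fin d → ℝ)) (I : Finset (Fin d → ℤ)) : Prop :=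
  ∀ k ∈ I, ∀ l ∈ I,
    (M : ℂ)⁻¹ * ∑ i, char (k - l) (x i) = if k - l = 0 then 1 else 0

/-- `g` is a least squares approximation of `f` at the nodes `p` from the span of the
exponentials with frequencies in `I`. -/
def IsLSQ {d n : ℕ} (p : Fin n → (Fin d → ℝ)) (I : Finset (Fin d → ℤ))
    (f g : (Fin d → ℝ) → ℂ) : Prop :=
  (∃ c : (Fin d → ℤ) → ℂ, g = fun x => ∑ k ∈ I, c k * char k x) ∧
    ∀ c : (Fin d → ℤ) → ℂ,
      (∑ i, ‖g (p i) - f (p i)‖ ^ 2) ≤ ∑ i, ‖(∑ k ∈ I, c k * char k (p i)) - f (p i)‖ ^ 2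

/-- The uniform probability measure on `Fin M`. -/
def unif (M : ℕ) [NeZero M] : Measure (Fin M) := (PMF.uniformOfFintype (Fin M)).toMeasure

/-- Concatenation of `x ∈ 𝕋^t` and `ξ ∈ 𝕋^{d-t}` into a point of `𝕋^d`. -/
def glue {d t : ℕ} (h : t ≤ d) (x : Fin t → ℝ) (ξ : Fin (d - t) → ℝ) : Fin d → ℝ :=
  fun j => Fin.append x ξ (Fin.cast (by omega) j)

/-- Concatenation of integer frequency vectors. -/
def glueZ {d t : ℕ} (h : t ≤ d) (k : Fin t → ℤ) (l : Fin (d - t) → ℤ) : Fin d → ℤ :=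
  fun j => Fin.append k l (Fin.cast (by omega) j)

/-- The projected Fourier coefficient `f̂_{{1,…,t},k}(ξ) = ∫_{𝕋^t} f(x,ξ) e^{-2πi⟨k,x⟩} dx`. -/
def projCoeff {d t : ℕ} (h : t ≤ d) (f : (Fin d → ℝ) → ℂ)
    (k : Fin t → ℤ) (ξ : Fin (d - t) → ℝ) : ℂ :=
  ∫ x, f (glue h x ξ) * (starRingEnd ℂ) (char k x) ∂(torusMeasure t)

/-- Projection `P_{{1,…,t}}(I)` of a frequency set onto the first `t` components. -/
def projFreq {d t : ℕ} (h : t ≤ d) (I : Finset (Fin d → ℤ)) : Finset (Fin t → ℤ) :=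
  I.image fun k => fun j => k (Fin.castLE h j)

/-- Projection `P_{I_M × ℤ^{d-t}} f` onto a cylindrical frequency set. -/
def projCyl {d t : ℕ} (h : t ≤ d) (IM : Finset (Fin t → ℤ)) (f : (Fin d → ℝ) → ℂ) :
    (Fin d → ℝ) → ℂ :=
  fun x => ∑' k : {k : Fin d → ℤ // (fun j => k (Fin.castLE h j)) ∈ IM},
    fCoeff f (k : Fin d → ℤ) * char (k : Fin d → ℤ) x

/-- The tail sum `∑_{k ∉ I} |f̂_k|`. -/
def tailSum {d : ℕ} (f : (Fin d → ℝ) → ℂ) (I : Finset (Fin d → ℤ)) : ℝ :=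
  ∑' k : {k : Fin d → ℤ // k ∉ I}, ‖fCoeff f (k : Fin d → ℤ)‖

/-! Splitting the frequencies as `(k, l) ∈ ℤ^t × ℤ^{d-t}`, the function `g_k` has the absolutely
convergent Fourier series `g_k(ξ) = ∑_l f̂_(k,l) e^{2πi⟨l,ξ⟩}`. Parseval then gives
`‖g_k‖₂² = ∑_l |f̂_(k,l)|² ≥ δ²`, since `k` is the projection of some frequency in `I_δ`, so that
`‖g_k‖₂² - δ'²` is at least half of both `δ²` and `‖g_k‖₂²`. The triangle inequality bounds
`‖g_k‖_∞` by the sum of the at most `|I_δ|` coefficients `|f̂_(k,l)|` with `(k,l) ∈ I_δ` plus the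
tail sum, and by Cauchy–Schwarz the square of that partial sum is at most `|I_δ| ‖g_k‖₂²`. -/

open Function Finset ComplexConjugate

theorem hasSum_integral_of_norm_le_summable {α E ι : Type*} [MeasurableSpace α]
    [NormedAddCommGroup E] [NormedSpace ℝ E] [Countable ι] {μ : Measure α} [IsFiniteMeasure μ]
    {F : ι → α → E} {g : α → E} {b : ι → ℝ} (hF : ∀ i, AEStronglyMeasurable (F i) μ)
    (hb : Summable b) (hFb : ∀ i x, ‖F i x‖ ≤ b i) (hg : ∀ x, HasSum (F · x) (g x)) :
    HasSum (fun i => ∫ x, F i x ∂μ) (∫ x, g x ∂μ) :=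
  hasSum_integral_of_dominated_convergence (fun i _ => b i) hF (fun i => ae_of_all _ (hFb i))
    (ae_of_all _ fun _ => hb) (integrable_const _) (ae_of_all _ hg)

theorem hasSum_ite_eq_diag_iff {ι α : Type*} [DecidableEq ι] [AddCommMonoid α]
    [TopologicalSpace α] {f : ι → ι → α} {a : α} :
    HasSum (fun p : ι × ι => if p.1 = p.2 then f p.1 p.2 else 0) a ↔ HasSum (fun i => f i i) a := by
  have hinj : Injective fun i : ι => (i, i) := fun i j h => congrArg Prod.fst h
  rw [← hinj.hasSum_iff fun p hp => if_neg fun hp' => hp ⟨p.1, Prod.ext rfl hp'⟩]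
  simp [Function.comp_def]

section Character

variable {n : ℕ}

theorem char_eq_exp (c : Fin n → ℤ) (x : Fin n → ℝ) :
    char c x = exp (↑(2 * Real.pi * ∑ j, (c j : ℝ) * x j) * I) := by
  rw [char]
  push_cast
  ring_nf

theorem norm_char (c : Fin n → ℤ) (x : Fin n → ℝ) : ‖char c x‖ = 1 := by
  rw [char_eq_exp, norm_exp_ofReal_mul_I]

theorem char_add (a b : Fin n → ℤ) (x : Fin n → ℝ) : char (a + b) x = char a x * char b x := by
  simp only [char, ← Complex.exp_add, Pi.add_apply, Int.cast_add, add_mul, sum_add_distrib, mul_add]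

theorem conj_char (c : Fin n → ℤ) (x : Fin n → ℝ) : conj (char c x) = char (-c) x := by
  simp only [char_eq_exp, ← Complex.exp_conj, map_mul, conj_ofReal, conj_I, Pi.neg_apply,
    Int.cast_neg, neg_mul, sum_neg_distrib]
  push_cast
  ring_nf

theorem char_mul_conj (a b : Fin n → ℤ) (x : Fin n → ℝ) :
    char a x * conj (char b x) = char (a - b) x := by
  rw [conj_char, ← char_add, sub_eq_add_neg]

@[fun_prop]
theorem continuous_char (c : Fin n → ℤ) : Continuous (char c) := by
  unfold char
  fun_prop

theorem char_eq_prod (c : Fin n → ℤ) (x : Fin n → ℝ) :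
    char c x = ∏ j, exp (2 * Real.pi * I * c j * x j) := by
  rw [char, mul_sum, Complex.exp_sum]
  simp only [mul_assoc]

theorem setIntegral_Ico_exp_two_pi_I_int_mul (m : ℤ) :
    ∫ y in Set.Ico (0 : ℝ) 1, exp (2 * Real.pi * I * m * y) = if m = 0 then 1 else 0 := by
  split_ifs with hm
  · simp [hm]
  have hc : 2 * Real.pi * I * m ≠ 0 := by simp [Real.pi_ne_zero, I_ne_zero, hm]
  rw [setIntegral_congr_set Ico_ae_eq_Ioc, ← intervalIntegral.integral_of_le zero_le_one,
    integral_exp_mul_complex hc]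
  have h1 : 2 * Real.pi * I * m * (1 : ℝ) = m * (2 * Real.pi * I) := by push_cast; ring
  rw [h1, exp_int_mul_two_pi_mul_I]
  simp

theorem torusMeasure_eq_pi :
    torusMeasure n = Measure.pi fun _ : Fin n => volume.restrict (Set.Ico (0 : ℝ) 1) := by
  refine (Measure.pi_eq fun s hs => ?_).symm
  rw [torusMeasure, cube, Measure.restrict_apply (MeasurableSet.univ_pi hs),
    ← Set.pi_inter_distrib, volume_pi_pi]
  exact prod_congr rfl fun i _ => (Measure.restrict_apply (hs i)).symm

instance : IsProbabilityMeasure (torusMeasure n) :=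
  ⟨by simp [torusMeasure, cube, volume_pi_pi, Real.volume_Ico]⟩

theorem integral_char (c : Fin n → ℤ) : ∫ x, char c x ∂torusMeasure n = if c = 0 then 1 else 0 := by
  simp only [char_eq_prod, torusMeasure_eq_pi]
  rw [integral_fintype_prod_eq_prod fun j (y : ℝ) => exp (2 * Real.pi * I * c j * y)]
  simp only [setIntegral_Ico_exp_two_pi_I_int_mul]
  split_ifs with hc
  · simp [hc]
  · obtain ⟨j, hj⟩ := Function.ne_iff.mp hc
    exact prod_eq_zero (mem_univ j) (if_neg hj)

theorem integral_char_mul_conj (a b : Fin n → ℤ) :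
    ∫ x, char a x * conj (char b x) ∂torusMeasure n = if a = b then 1 else 0 := by
  simp only [char_mul_conj, integral_char, sub_eq_zero]

theorem integral_mul_char_mul_conj (a b : ℂ) (l l' : Fin n → ℤ) :
    ∫ x, a * char l x * conj (b * char l' x) ∂torusMeasure n =
      if l = l' then a * conj b else 0 := by
  have hsplit : ∀ x, a * char l x * conj (b * char l' x) =
      a * conj b * (char l x * conj (char l' x)) := fun x => by rw [map_mul]; ring
  simp only [hsplit, integral_const_mul, integral_char_mul_conj, mul_ite, mul_one, mul_zero]

end Character

theorem hasSum_sq_L2sq {n : ℕ} {c : (Fin n → ℤ) → ℂ} (hc : Summable (‖c ·‖))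
    {g : (Fin n → ℝ) → ℂ} (hg : ∀ x, HasSum (fun l => c l * char l x) (g x)) :
    HasSum (fun l => ‖c l‖ ^ 2) (L2sq g) := by
  have hprod : ∀ x, HasSum (fun p : (Fin n → ℤ) × (Fin n → ℤ) =>
      c p.1 * char p.1 x * conj (c p.2 * char p.2 x)) (g x * conj (g x)) := by
    intro x
    have hcx : Summable fun l => ‖c l * char l x‖ := by simpa [norm_char] using hc
    have hcx' : Summable fun l => ‖conj (c l * char l x)‖ := by simpa using hcx
    have hsummable := summable_mul_of_summable_norm hcx hcx'
    have hmul := (hg x).mul (Complex.hasSum_conj'.mpr (hg x)) hsummable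
    exact hmul
  have hcont : ∀ p : (Fin n → ℤ) × (Fin n → ℤ),
      Continuous fun x => c p.1 * char p.1 x * conj (c p.2 * char p.2 x) := fun p => by fun_prop
  have hsum := hasSum_integral_of_norm_le_summable (μ := torusMeasure n)
    (fun p => (hcont p).aestronglyMeasurable)
    (hc.mul_of_nonneg hc (fun _ => norm_nonneg _) (fun _ => norm_nonneg _))
    (fun p x => by simp [norm_char]) hprod
  simp only [integral_mul_char_mul_conj] at hsum
  replace hsum := (hasSum_ite_eq_diag_iff (f := fun l l' => c l * conj (c l'))).mp hsum
  simp only [Complex.mul_conj, Complex.normSq_eq_norm_sq] at hsum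
  rw [integral_complex_ofReal] at hsum
  exact Complex.hasSum_ofReal.mp hsum

section Split

variable {d t : ℕ} (h : t ≤ d)

def glueZEquiv : (Fin t → ℤ) × (Fin (d - t) → ℤ) ≃ (Fin d → ℤ) :=
  (Fin.appendEquiv t (d - t)).trans (Equiv.piCongrLeft' _ (finCongr (by omega)))

theorem glueZ_injective (k : Fin t → ℤ) : Injective (glueZ h k) :=
  fun l l' hl => congrArg Prod.snd ((glueZEquiv h).injective (a₁ := (k, l)) (a₂ := (k, l')) hl)

theorem exists_glueZ_mem_of_mem_projFreq {I : Finset (Fin d → ℤ)} {k : Fin t → ℤ}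
    (hk : k ∈ projFreq h I) : ∃ l, glueZ h k l ∈ I := by
  obtain ⟨m, hm, rfl⟩ := mem_image.mp hk
  refine ⟨((glueZEquiv h).symm m).2, ?_⟩
  rwa [← (glueZEquiv h).apply_symm_apply m] at hm

@[fun_prop]
theorem continuous_glue (ξ : Fin (d - t) → ℝ) : Continuous fun x => glue h x ξ := by
  unfold glue
  fun_prop

theorem char_glueZ_glue (k : Fin t → ℤ) (l : Fin (d - t) → ℤ) (x : Fin t → ℝ)
    (ξ : Fin (d - t) → ℝ) : char (glueZ h k l) (glue h x ξ) = char k x * char l ξ := by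
  simp only [char, ← Complex.exp_add, ← mul_add]
  congr 2
  rw [← (finCongr (by omega : t + (d - t) = d)).sum_comp, Fin.sum_univ_add]
  simp [glueZ, glue]

end Split

theorem hasSum_projCoeff {d t : ℕ} (h : t ≤ d) {f : (Fin d → ℝ) → ℂ}
    (hf : HasAbsFourierSeries f) (k : Fin t → ℤ) (ξ : Fin (d - t) → ℝ) :
    HasSum (fun l => fCoeff f (glueZ h k l) * char l ξ) (projCoeff h f k ξ) := by
  set c : (Fin t → ℤ) × (Fin (d - t) → ℤ) → ℂ := fun p => fCoeff f (glueZ h p.1 p.2)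
  have hterm : ∀ p x, c p * char (glueZ h p.1 p.2) (glue h x ξ) * conj (char k x) =
      c p * char p.2 ξ * (char p.1 x * conj (char k x)) := by
    intro p x
    rw [char_glueZ_glue]
    ring
  have hsum : HasSum (fun p => ∫ x, c p * char (glueZ h p.1 p.2) (glue h x ξ) * conj (char k x)
      ∂torusMeasure t) (projCoeff h f k ξ) := by
    refine hasSum_integral_of_norm_le_summable (b := (‖c ·‖)) (fun p => ?_)
      ((glueZEquiv h).summable_iff.mpr hf.1) (fun p x => ?_) (fun x => ?_)
    · exact Continuous.aestronglyMeasurable (by fun_prop)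
    · simp [norm_char]
    · exact ((glueZEquiv h).hasSum_iff.mpr (hf.2 _)).mul_right _
  simp only [hterm, integral_const_mul, integral_char_mul_conj, mul_ite, mul_one, mul_zero] at hsum
  have hzero : ∀ p ∉ Set.range (Prod.mk k), (if p.1 = k then c p * char p.2 ξ else 0) = 0 :=
    fun p hp => if_neg fun hpk => hp ⟨p.2, by rw [← hpk]⟩
  simpa [Function.comp_def, c] using ((Prod.mk_right_injective k).hasSum_iff hzero).mpr hsum

theorem norm_projCoeff_le {d t : ℕ} (h : t ≤ d) {f : (Fin d → ℝ) → ℂ}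
    (hf : HasAbsFourierSeries f) (I : Finset (Fin d → ℤ)) (k : Fin t → ℤ)
    (ξ : Fin (d - t) → ℝ) :
    ‖projCoeff h f k ξ‖ ≤ ∑ l ∈ I.preimage (glueZ h k) (glueZ_injective h k).injOn,
      ‖fCoeff f (glueZ h k l)‖ + tailSum f I := by
  set S := I.preimage (glueZ h k) (glueZ_injective h k).injOn
  have hc : Summable fun l => ‖fCoeff f (glueZ h k l)‖ := hf.1.comp_injective (glueZ_injective h k)
  have htail : ∑' l : ↑(↑S : Set (Fin (d - t) → ℤ))ᶜ, ‖fCoeff f (glueZ h k l)‖ ≤ tailSum f I :=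
    tsum_comp_le_tsum_of_inj (f := fun m : {m // m ∉ I} => ‖fCoeff f m‖)
      (hf.1.subtype {m | m ∉ I}) (fun _ => norm_nonneg _)
      (i := fun l : ↑(↑S : Set (Fin (d - t) → ℤ))ᶜ => ⟨glueZ h k l, by simpa [S] using l.2⟩)
      fun l l' hl => Subtype.ext (glueZ_injective h k (congrArg Subtype.val hl))
  calc ‖projCoeff h f k ξ‖ ≤ ∑' l, ‖fCoeff f (glueZ h k l)‖ :=
        (hasSum_projCoeff h hf k ξ).norm_le_of_bounded hc.hasSum fun l => by simp [norm_char]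
    _ = ∑ l ∈ S, ‖fCoeff f (glueZ h k l)‖ + ∑' l : ↑(↑S : Set (Fin (d - t) → ℤ))ᶜ,
        ‖fCoeff f (glueZ h k l)‖ := hc.sum_add_tsum_compl.symm
    _ ≤ _ := by gcongr

theorem tailSum_nonneg {d : ℕ} (f : (Fin d → ℝ) → ℂ) (I : Finset (Fin d → ℤ)) :
    0 ≤ tailSum f I :=
  tsum_nonneg fun _ => norm_nonneg _

theorem supNorm_nonneg {n : ℕ} (g : (Fin n → ℝ) → ℂ) : 0 ≤ supNorm g :=
  Real.iSup_nonneg fun _ => Real.iSup_nonneg fun _ => norm_nonneg _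

theorem supNorm_le {n : ℕ} {g : (Fin n → ℝ) → ℂ} {B : ℝ} (hB : 0 ≤ B) (hg : ∀ x, ‖g x‖ ≤ B) :
    supNorm g ≤ B :=
  Real.iSup_le (fun x => Real.iSup_le (fun _ => hg x) hB) hB

theorem sq_div_sub_sq_le {N A T L c δ δ' : ℝ} (hδ : 0 < δ) (hδ' : δ' ^ 2 ≤ δ ^ 2 / 2)
    (hL : δ ^ 2 ≤ L) (hN0 : 0 ≤ N) (hN : N ≤ A + T) (hA : A ^ 2 ≤ c * L) :
    N ^ 2 / (L - δ' ^ 2) ≤ 4 * c + 4 / δ ^ 2 * T ^ 2 := by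
  have hpos : 0 < L - δ' ^ 2 := by nlinarith
  have hc : 0 ≤ c := by nlinarith [sq_nonneg A]
  rw [div_le_iff₀ hpos]
  have hT : 2 * T ^ 2 ≤ 4 / δ ^ 2 * T ^ 2 * (L - δ' ^ 2) := by
    have h2 : 2 * T ^ 2 = 4 / δ ^ 2 * T ^ 2 * (δ ^ 2 / 2) := by field_simp; ring
    rw [h2]
    gcongr
    linarith
  have hcL : c * L ≤ 2 * c * (L - δ' ^ 2) := by nlinarith
  nlinarith [sq_nonneg (A - T)]

theorem projCoeff_detection_ratio_general {d t : ℕ} (htd : t ≤ d)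
    (f : (Fin d → ℝ) → ℂ) (hf : HasAbsFourierSeries f)
    (δ : ℝ) (hδ : 0 < δ)
    (Iδ : Finset (Fin d → ℤ)) (hIδ : ∀ k, k ∈ Iδ ↔ δ ≤ ‖fCoeff f k‖)
    (k : Fin t → ℤ) (hk : k ∈ projFreq htd Iδ)
    (δ' : ℝ) (hδ'0 : 0 < δ') (hδ' : δ' ≤ δ / Real.sqrt 2) :
    0 < L2sq (projCoeff htd f k) - δ' ^ 2 ∧
      supNorm (projCoeff htd f k) ^ 2 / (L2sq (projCoeff htd f k) - δ' ^ 2) ≤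
        4 * (Iδ.card : ℝ) + 4 / δ ^ 2 * tailSum f Iδ ^ 2 := by
  set c := fun l => fCoeff f (glueZ htd k l)
  set S := Iδ.preimage (glueZ htd k) (glueZ_injective htd k).injOn
  have hL2 : HasSum (‖c ·‖ ^ 2) (L2sq (projCoeff htd f k)) :=
    hasSum_sq_L2sq (hf.1.comp_injective (glueZ_injective htd k)) (hasSum_projCoeff htd hf k)
  have hδ'sq : δ' ^ 2 ≤ δ ^ 2 / 2 := by
    simpa [div_pow] using pow_le_pow_left₀ hδ'0.le hδ' 2
  obtain ⟨l₀, hl₀⟩ := exists_glueZ_mem_of_mem_projFreq htd hk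
  have hδL : δ ^ 2 ≤ L2sq (projCoeff htd f k) :=
    (pow_le_pow_left₀ hδ.le ((hIδ _).mp hl₀) 2).trans (le_hasSum hL2 l₀ fun _ _ => by positivity)
  have hsup : supNorm (projCoeff htd f k) ≤ ∑ l ∈ S, ‖c l‖ + tailSum f Iδ :=
    supNorm_le (add_nonneg (by positivity) (tailSum_nonneg f Iδ)) (norm_projCoeff_le htd hf Iδ k)
  have hS : (∑ l ∈ S, ‖c l‖) ^ 2 ≤ Iδ.card * L2sq (projCoeff htd f k) :=
    calc (∑ l ∈ S, ‖c l‖) ^ 2 ≤ S.card * ∑ l ∈ S, ‖c l‖ ^ 2 := sq_sum_le_card_mul_sum_sq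
      _ ≤ Iδ.card * L2sq (projCoeff htd f k) := by
        gcongr
        · exact_mod_cast card_le_card_of_injOn _ (fun l hl => mem_preimage.mp hl)
            (glueZ_injective htd k).injOn
        · exact sum_le_hasSum S (fun _ _ => by positivity) hL2
  exact ⟨by linarith [pow_pos hδ 2], sq_div_sub_sq_le hδ hδ'sq hδL (supNorm_nonneg _) hsup hS⟩

/-- for `k ∈ P_{{1,…,t}}(I_δ)` and `0 < δ' ≤ δ/√2`, the projected
coefficient function `g_k = f̂_{{1,…,t},k}(·)` satisfies `‖g_k‖₂² - δ'² > 0` and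
`‖g_k‖_∞² / (‖g_k‖₂² - δ'²) ≤ 4|I_δ| + (4/δ²)(∑_{l ∉ I_δ}|f̂_l|)²`. -/
theorem projCoeff_detection_ratio {d t : ℕ} (ht1 : 1 ≤ t) (htd : t ≤ d)
    (f : (Fin d → ℝ) → ℂ) (hf : HasAbsFourierSeries f)
    (δ : ℝ) (hδ : 0 < δ)
    (Iδ : Finset (Fin d → ℤ)) (hIδ : ∀ k, k ∈ Iδ ↔ δ ≤ ‖fCoeff f k‖)
    (hne : Iδ.Nonempty)
    (k : Fin t → ℤ) (hk : k ∈ projFreq htd Iδ)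
    (δ' : ℝ) (hδ'0 : 0 < δ') (hδ' : δ' ≤ δ / Real.sqrt 2) :
    0 < L2sq (projCoeff htd f k) - δ' ^ 2 ∧
      supNorm (projCoeff htd f k) ^ 2 / (L2sq (projCoeff htd f k) - δ' ^ 2) ≤
        4 * (Iδ.card : ℝ) + 4 / δ ^ 2 * tailSum f Iδ ^ 2 :=
  projCoeff_detection_ratio_general htd f hf δ hδ Iδ hIδ k hk δ' hδ'0 hδ'
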